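/- Let G=(V,E) be a connected graph, let C ⊆ V be a set of vertices with effective resistance diameter at most β in G (i.e., R^G_{xy} ≤ β for all x,y ∈ C), and let u ∈ C. Let H = G/C be the graph obtained from G by contracting C to a single super-node c. Then for every vertex v ∉ C with R^G_{uv} ≥ β, one has R^H_{cv} ≥ R^G_{uv} · (1 - β/R^G_{uv})^2. -/

import Mathlib

open Matrix BigOperators Finset

noncomputable section

variable {V : Type*} [Fintype V] [DecidableEq V]

/-- Laplacian of a weighted graph on vertex set `V` with weights `w`. -/
def lap (w : V → V → ℝ) : Matrix V V ℝ :=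
  Matrix.of fun a b => if a = b then ∑ x, w a x else -(w a b)

/-- The four Moore–Penrose conditions: `P` is the pseudoinverse of `L`. -/
def IsMPInv (L P : Matrix V V ℝ) : Prop :=
  L * P * L = L ∧ P * L * P = P ∧ (L * P)ᵀ = L * P ∧ (P * L)ᵀ = P * L

/-- Indicator vector `χ_u` of a vertex. -/
def chi (u : V) : V → ℝ := Pi.single u 1

/-- Effective resistance `R_{uv} = (χ_u - χ_v)ᵀ L⁺ (χ_u - χ_v)`, computed
from a pseudoinverse `P = L⁺` of the Laplacian. -/
def effRes (P : Matrix V V ℝ) (u v : V) : ℝ :=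
  (chi u - chi v) ⬝ᵥ P.mulVec (chi u - chi v)

/-- Energy `Σ_{e=(a,b)∈E} w(e) (φ(a) - φ(b))²` of a potential vector
(each edge counted once: the double sum counts ordered pairs, whence the `1/2`). -/
def energy (w : V → V → ℝ) (φ : V → ℝ) : ℝ :=
  (1 / 2) * ∑ a, ∑ b, w a b * (φ a - φ b) ^ 2

/-- Connectivity of the weighted graph: the kernel of its Laplacian consists
exactly of the constant vectors. -/
def Conn (w : V → V → ℝ) : Prop :=
  ∀ x : V → ℝ, (lap w).mulVec x = 0 → ∀ a b : V, x a = x b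

/-- Weights of the contracted graph `H = G/C`: the vertices of `C` are identified
into a single super-node (the `Sum.inr` vertex); parallel edges to a vertex
outside `C` merge into a single edge whose weight is the sum of their weights,
and edges inside `C` disappear. -/
def contrW (w : V → V → ℝ) (C : Finset V) :
    ({x : V // x ∉ C} ⊕ Unit) → ({x : V // x ∉ C} ⊕ Unit) → ℝ
  | Sum.inl x, Sum.inl y => w x.1 y.1
  | Sum.inl x, Sum.inr _ => ∑ z ∈ C, w x.1 z
  | Sum.inr _, Sum.inl y => ∑ z ∈ C, w z y.1
  | Sum.inr _, Sum.inr _ => 0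

-- ====================== helper lemmas ======================

lemma dot_mulVec_symm (A : Matrix V V ℝ) (h : Aᵀ = A) (x y : V → ℝ) :
    A.mulVec x ⬝ᵥ y = x ⬝ᵥ A.mulVec y := by
  rw [dotProduct_comm, Matrix.dotProduct_mulVec, ← h, Matrix.vecMul_transpose,
    dotProduct_comm, h]

lemma lap_transpose (w : V → V → ℝ) (hsym : ∀ a b, w a b = w b a) : (lap w)ᵀ = lap w := by
  ext a b
  by_cases h : a = b
  · subst h; simp [lap]
  · simp [lap, Matrix.transpose_apply, h, Ne.symm h, hsym a b]

lemma lap_mulVec (w : V → V → ℝ) (hdiag : ∀ a, w a a = 0) (φ : V → ℝ) (a : V) :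
    (lap w).mulVec φ a = ∑ b, w a b * (φ a - φ b) := by
  have hl : ∀ b, lap w a b = (if a = b then ∑ x, w a x else 0) - w a b := by
    intro b
    by_cases h : a = b
    · subst h; simp [lap, hdiag]
    · simp [lap, h]
  simp only [Matrix.mulVec, dotProduct]
  calc ∑ b, lap w a b * φ b
      = ∑ b, (((if a = b then ∑ x, w a x else 0) - w a b) * φ b) := by
        exact Finset.sum_congr rfl fun b _ => by rw [hl b]
    _ = ∑ b, ((if a = b then (∑ x, w a x) * φ b else 0) - w a b * φ b) := by
        exact Finset.sum_congr rfl fun b _ => by by_cases h : a = b <;> simp [h] <;> ring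
    _ = (∑ x, w a x) * φ a - ∑ b, w a b * φ b := by
        rw [Finset.sum_sub_distrib, Finset.sum_ite_eq]
        simp
    _ = ∑ b, w a b * (φ a - φ b) := by
        rw [Finset.sum_mul] at *
        rw [← Finset.sum_sub_distrib]
        exact Finset.sum_congr rfl fun b _ => by ring

set_option linter.unusedSectionVars false

lemma quad_eq_energy (w : V → V → ℝ) (hsym : ∀ a b, w a b = w b a) (hdiag : ∀ a, w a a = 0)
    (φ : V → ℝ) : φ ⬝ᵥ (lap w).mulVec φ = energy w φ := by
  have swap : ∑ a, ∑ b, w a b * (φ b ^ 2 - φ a * φ b)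
      = ∑ a, ∑ b, w a b * (φ a ^ 2 - φ a * φ b) := by
    rw [Finset.sum_comm]
    exact Finset.sum_congr rfl fun a _ => Finset.sum_congr rfl fun b _ => by
      rw [hsym b a]; ring
  have lhs : φ ⬝ᵥ (lap w).mulVec φ = ∑ a, ∑ b, w a b * (φ a ^ 2 - φ a * φ b) := by
    simp only [dotProduct]
    rw [Finset.sum_congr rfl fun a (_ : a ∈ univ) => by rw [lap_mulVec w hdiag φ a]]
    exact Finset.sum_congr rfl fun a _ => by
      rw [Finset.mul_sum]
      exact Finset.sum_congr rfl fun b _ => by ring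
  rw [lhs, energy]
  have : ∑ a, ∑ b, w a b * (φ a - φ b) ^ 2
      = ∑ a, ∑ b, (w a b * (φ a ^ 2 - φ a * φ b) + w a b * (φ b ^ 2 - φ a * φ b)) := by
    exact Finset.sum_congr rfl fun a _ => Finset.sum_congr rfl fun b _ => by ring
  rw [this]
  simp only [Finset.sum_add_distrib]
  rw [swap]; ring

lemma energy_nonneg (w : V → V → ℝ) (hnn : ∀ a b, 0 ≤ w a b) (φ : V → ℝ) :
    0 ≤ energy w φ := by
  apply mul_nonneg (by norm_num)
  exact Finset.sum_nonneg fun a _ => Finset.sum_nonneg fun b _ =>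
    mul_nonneg (hnn a b) (sq_nonneg _)

lemma mulVec_eq_zero_of_energy (w : V → V → ℝ) (hnn : ∀ a b, 0 ≤ w a b)
    (hdiag : ∀ a, w a a = 0) (φ : V → ℝ) (h : energy w φ = 0) :
    (lap w).mulVec φ = 0 := by
  have hsum : ∑ a, ∑ b, w a b * (φ a - φ b) ^ 2 = 0 := by
    have := h; rw [energy] at this; linarith
  have hterm : ∀ a ∈ (univ : Finset V), ∀ b ∈ (univ : Finset V), w a b * (φ a - φ b) ^ 2 = 0 := by
    intro a _ b hb
    have h1 := (Finset.sum_eq_zero_iff_of_nonneg (fun a _ => Finset.sum_nonneg fun b _ =>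
      mul_nonneg (hnn a b) (sq_nonneg _))).1 hsum a (Finset.mem_univ a)
    exact (Finset.sum_eq_zero_iff_of_nonneg (fun b _ =>
      mul_nonneg (hnn a b) (sq_nonneg _))).1 h1 b hb
  funext a
  rw [lap_mulVec w hdiag φ a]
  simp only [Pi.zero_apply]
  apply Finset.sum_eq_zero
  intro b hb
  rcases mul_eq_zero.1 (hterm a (Finset.mem_univ a) b hb) with h0 | h0
  · rw [h0, zero_mul]
  · rw [pow_eq_zero_iff (by norm_num) |>.1 h0, mul_zero]

lemma sum_lap_mulVec (w : V → V → ℝ) (hsym : ∀ a b, w a b = w b a) (hdiag : ∀ a, w a a = 0)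
    (φ : V → ℝ) : ∑ a, (lap w).mulVec φ a = 0 := by
  have h : ∑ a, (lap w).mulVec φ a = ∑ a, ∑ b, w a b * (φ a - φ b) :=
    Finset.sum_congr rfl fun a _ => lap_mulVec w hdiag φ a
  have hneg : ∑ a, ∑ b, w a b * (φ a - φ b) = -∑ a, ∑ b, w a b * (φ a - φ b) := by
    nth_rewrite 1 [Finset.sum_comm]
    rw [← Finset.sum_neg_distrib]
    refine Finset.sum_congr rfl fun a _ => ?_
    rw [← Finset.sum_neg_distrib]
    exact Finset.sum_congr rfl fun b _ => by rw [hsym b a]; ring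
  rw [h]; linarith

/-- key fixed point lemma:  L (P z) = z  whenever  ∑ z = 0. -/
lemma lap_fix (w : V → V → ℝ) (hsym : ∀ a b, w a b = w b a) (hnn : ∀ a b, 0 ≤ w a b)
    (hdiag : ∀ a, w a a = 0) (hconn : Conn w) (P : Matrix V V ℝ)
    (hP1 : lap w * P * lap w = lap w) (hP3 : (lap w * P)ᵀ = lap w * P)
    [Nonempty V] (z : V → ℝ) (hz : ∑ a, z a = 0) :
    (lap w).mulVec (P.mulVec z) = z := by
  set L := lap w with hL
  have hLsym : Lᵀ = L := lap_transpose w hsym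
  set y : V → ℝ := fun a => L.mulVec (P.mulVec z) a - z a with hy
  -- ⟨Lx, y⟩ = 0 for all x
  have horth : ∀ x : V → ℝ, L.mulVec x ⬝ᵥ y = 0 := by
    intro x
    have h1 : L.mulVec x ⬝ᵥ (fun a => L.mulVec (P.mulVec z) a) = L.mulVec x ⬝ᵥ z := by
      have : (fun a => L.mulVec (P.mulVec z) a) = (L * P).mulVec z := by
        funext a; rw [← Matrix.mulVec_mulVec]
      rw [this, Matrix.dotProduct_mulVec, ← Matrix.mulVec_transpose, hP3,
        Matrix.mulVec_mulVec, hP1]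
    have h2 : L.mulVec x ⬝ᵥ y = L.mulVec x ⬝ᵥ (fun a => L.mulVec (P.mulVec z) a)
        - L.mulVec x ⬝ᵥ z := by
      simp only [hy, dotProduct, ← Finset.sum_sub_distrib]
      exact Finset.sum_congr rfl fun a _ => by ring
    rw [h2, h1, sub_self]
  -- hence L y = 0
  have hLy : L.mulVec y = 0 := by
    funext j
    have := horth (Pi.single j 1)
    rw [dot_mulVec_symm L hLsym] at this
    simpa [dotProduct, Pi.single_apply] using this
  -- Conn: y constant
  have hconst : ∀ a b : V, y a = y b := hconn y hLy
  -- sum of y = 0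
  have hsumy : ∑ a, y a = 0 := by
    simp only [hy, Finset.sum_sub_distrib]
    rw [sum_lap_mulVec w hsym hdiag, hz, sub_zero]
  -- constant with zero sum ⇒ zero
  have hy0 : ∀ a, y a = 0 := by
    intro a
    have hcard : (Fintype.card V : ℝ) ≠ 0 := by
      exact_mod_cast Fintype.card_ne_zero
    have : ∑ b, y b = (Fintype.card V : ℝ) * y a := by
      rw [Finset.sum_congr rfl fun b _ => hconst b a]
      simp [Finset.card_univ, mul_comm]
    rw [hsumy] at this
    field_simp at this
    exact (mul_eq_zero.1 this.symm).resolve_left hcard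
  funext a
  have := hy0 a
  simp only [hy] at this
  linarith [this]

/-- Cauchy–Schwarz for the PSD form of the Laplacian. -/
lemma lap_cs (w : V → V → ℝ) (hsym : ∀ a b, w a b = w b a) (hnn : ∀ a b, 0 ≤ w a b)
    (hdiag : ∀ a, w a a = 0) (x y : V → ℝ) :
    (x ⬝ᵥ (lap w).mulVec y) ^ 2 ≤ (x ⬝ᵥ (lap w).mulVec x) * (y ⬝ᵥ (lap w).mulVec y) := by
  set L := lap w with hdefL
  have hLsym : Lᵀ = L := lap_transpose w hsym
  have hxy : x ⬝ᵥ L.mulVec y = y ⬝ᵥ L.mulVec x := by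
    rw [← dot_mulVec_symm L hLsym, dotProduct_comm]
  have key : ∀ t : ℝ, 0 ≤ (y ⬝ᵥ L.mulVec y) * (t * t) + (2 * (x ⬝ᵥ L.mulVec y)) * t
      + (x ⬝ᵥ L.mulVec x) := by
    intro t
    have hq : (x + t • y) ⬝ᵥ L.mulVec (x + t • y)
        = (y ⬝ᵥ L.mulVec y) * (t * t) + (2 * (x ⬝ᵥ L.mulVec y)) * t + (x ⬝ᵥ L.mulVec x) := by
      simp only [Matrix.mulVec_add, Matrix.mulVec_smul, dotProduct_add, add_dotProduct,
        dotProduct_smul, smul_dotProduct, smul_eq_mul]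
      rw [hxy]; ring
    have hnn2 := energy_nonneg w hnn (x + t • y)
    rw [← quad_eq_energy w hsym hdiag] at hnn2
    rw [← hdefL] at hnn2
    linarith [hq ▸ hnn2]
  have hd := discrim_le_zero key
  rw [discrim] at hd
  nlinarith [hd]

lemma sum_chi_sub (s t : V) : ∑ a, (chi s - chi t) a = 0 := by
  simp [chi, Finset.sum_sub_distrib, Pi.single_apply]

lemma dot_chi_sub (s t : V) (ψ : V → ℝ) : (chi s - chi t) ⬝ᵥ ψ = ψ s - ψ t := by
  simp [chi, dotProduct, sub_mul, Finset.sum_sub_distrib, Pi.single_apply, Finset.sum_ite_eq]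

section main
variable (w : V → V → ℝ) (hsym : ∀ a b, w a b = w b a) (hnn : ∀ a b, 0 ≤ w a b)
  (hdiag : ∀ a, w a a = 0) (hconn : Conn w) (P : Matrix V V ℝ)
  (hP1 : lap w * P * lap w = lap w) (hP3 : (lap w * P)ᵀ = lap w * P) [Nonempty V]

include hsym hnn hdiag hconn hP1 hP3

/-- `R_{st} = E(Pχ)`. -/
lemma effRes_eq_energy (s t : V) :
    effRes P s t = energy w (P.mulVec (chi s - chi t)) := by
  set χ := chi s - chi t
  have hfix : (lap w).mulVec (P.mulVec χ) = χ :=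
    lap_fix w hsym hnn hdiag hconn P hP1 hP3 χ (sum_chi_sub s t)
  rw [effRes, ← quad_eq_energy w hsym hdiag]
  calc χ ⬝ᵥ P.mulVec χ = (lap w).mulVec (P.mulVec χ) ⬝ᵥ P.mulVec χ := by rw [hfix]
    _ = P.mulVec χ ⬝ᵥ (lap w).mulVec (P.mulVec χ) := by
        rw [dot_mulVec_symm _ (lap_transpose w hsym)]

lemma effRes_nonneg (s t : V) : 0 ≤ effRes P s t := by
  rw [effRes_eq_energy w hsym hnn hdiag hconn P hP1 hP3]
  exact energy_nonneg w hnn _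

lemma effRes_pos (s t : V) (hst : s ≠ t) : 0 < effRes P s t := by
  rcases lt_or_eq_of_le (effRes_nonneg w hsym hnn hdiag hconn P hP1 hP3 s t) with h | h
  · exact h
  · exfalso
    have hE : energy w (P.mulVec (chi s - chi t)) = 0 := by
      rw [← effRes_eq_energy w hsym hnn hdiag hconn P hP1 hP3, ← h]
    have h0 := mulVec_eq_zero_of_energy w hnn hdiag _ hE
    have hfix : (lap w).mulVec (P.mulVec (chi s - chi t)) = chi s - chi t :=
      lap_fix w hsym hnn hdiag hconn P hP1 hP3 _ (sum_chi_sub s t)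
    rw [h0] at hfix
    have := congrFun hfix s
    simp [chi, Pi.single_apply, hst, Ne.symm hst] at this

/-- any potential `ψ` gives a lower bound: `(ψ s - ψ t)² ≤ R_{st} · E(ψ)`. -/
lemma gap_sq (s t : V) (ψ : V → ℝ) :
    (ψ s - ψ t) ^ 2 ≤ effRes P s t * energy w ψ := by
  set L := lap w with hdefL
  set χ := chi s - chi t
  have hfix : L.mulVec (P.mulVec χ) = χ :=
    lap_fix w hsym hnn hdiag hconn P hP1 hP3 χ (sum_chi_sub s t)
  have h1 : ψ s - ψ t = P.mulVec χ ⬝ᵥ L.mulVec ψ := by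
    rw [← dot_mulVec_symm _ (lap_transpose w hsym), hfix, dot_chi_sub]
  have h2 : P.mulVec χ ⬝ᵥ L.mulVec (P.mulVec χ) = effRes P s t := by
    rw [← dot_mulVec_symm _ (lap_transpose w hsym), hfix, effRes]
  have hcs := lap_cs w hsym hnn hdiag (P.mulVec χ) ψ
  rw [← hdefL] at hcs
  rw [h1, ← quad_eq_energy w hsym hdiag ψ, ← h2, ← hdefL]
  exact hcs

/-- swap identity for sum-zero vectors. -/
lemma dot_P_swap (z z' : V → ℝ) (hz : ∑ a, z a = 0) (hz' : ∑ a, z' a = 0) :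
    z ⬝ᵥ P.mulVec z' = z' ⬝ᵥ P.mulVec z := by
  set L := lap w
  have hLsym : Lᵀ = L := lap_transpose w hsym
  have f1 : L.mulVec (P.mulVec z) = z := lap_fix w hsym hnn hdiag hconn P hP1 hP3 z hz
  have f2 : L.mulVec (P.mulVec z') = z' := lap_fix w hsym hnn hdiag hconn P hP1 hP3 z' hz'
  calc z ⬝ᵥ P.mulVec z' = L.mulVec (P.mulVec z) ⬝ᵥ P.mulVec z' := by rw [f1]
    _ = P.mulVec z ⬝ᵥ L.mulVec (P.mulVec z') := by rw [dot_mulVec_symm _ hLsym]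
    _ = P.mulVec z ⬝ᵥ z' := by rw [f2]
    _ = z' ⬝ᵥ P.mulVec z := by rw [dotProduct_comm]

end main

lemma energy_parallelogram (w : V → V → ℝ) (φ ψ : V → ℝ) :
    energy w (fun a => (φ a + ψ a) / 2) + energy w (fun a => (φ a - ψ a) / 2)
      = (energy w φ + energy w ψ) / 2 := by
  have H : ∀ f g : V → V → ℝ, ((∑ a, ∑ b, f a b) + ∑ a, ∑ b, g a b)
      = ∑ a, ∑ b, (f a b + g a b) := by
    intro f g
    rw [← Finset.sum_add_distrib]
    exact Finset.sum_congr rfl fun a _ => (Finset.sum_add_distrib).symm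
  have H2 : ∀ f : V → V → ℝ, (∑ a, ∑ b, f a b) / 2 = ∑ a, ∑ b, f a b / 2 := by
    intro f
    rw [Finset.sum_div]
    exact Finset.sum_congr rfl fun a _ => Finset.sum_div _ _ _
  simp only [energy]
  have key : (∑ a, ∑ b, w a b * ((φ a + ψ a) / 2 - (φ b + ψ b) / 2) ^ 2)
      + ∑ a, ∑ b, w a b * ((φ a - ψ a) / 2 - (φ b - ψ b) / 2) ^ 2
      = ((∑ a, ∑ b, w a b * (φ a - φ b) ^ 2) + ∑ a, ∑ b, w a b * (ψ a - ψ b) ^ 2) / 2 := by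
    rw [H, H, H2]
    exact Finset.sum_congr rfl fun a _ => Finset.sum_congr rfl fun b _ => by ring
  linarith

section maxp
variable (w : V → V → ℝ) (hsym : ∀ a b, w a b = w b a) (hnn : ∀ a b, 0 ≤ w a b)
  (hdiag : ∀ a, w a a = 0) (hconn : Conn w) (P : Matrix V V ℝ)
  (hP1 : lap w * P * lap w = lap w) (hP3 : (lap w * P)ᵀ = lap w * P) [Nonempty V]

include hsym hnn hdiag hconn hP1 hP3

/-- maximum principle: the potential `P (χ_a - χ_b)` attains its maximum at `a`. -/
lemma maxPrinciple (a b : V) (hab : a ≠ b) (x : V) :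
    P.mulVec (chi a - chi b) x ≤ P.mulVec (chi a - chi b) a := by
  set χ := chi a - chi b with hχ
  set φ := P.mulVec χ with hφ
  set R := effRes P a b with hR
  have hRpos : 0 < R := effRes_pos w hsym hnn hdiag hconn P hP1 hP3 a b hab
  have hgap : φ a - φ b = R := by rw [hR, effRes, ← dot_chi_sub a b φ]
  have hEφ : energy w φ = R := (effRes_eq_energy w hsym hnn hdiag hconn P hP1 hP3 a b).symm
  set ψ : V → ℝ := fun y => min (φ y) (φ a) with hψ
  have hψa : ψ a = φ a := min_eq_left le_rfl
  have hψb : ψ b = φ b := min_eq_left (by linarith)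
  -- energy of ψ at most energy of φ
  have hEψle : energy w ψ ≤ energy w φ := by
    apply mul_le_mul_of_nonneg_left _ (by norm_num : (0:ℝ) ≤ 1/2)
    apply Finset.sum_le_sum
    intro i _
    apply Finset.sum_le_sum
    intro j _
    apply mul_le_mul_of_nonneg_left _ (hnn i j)
    have : |ψ i - ψ j| ≤ |φ i - φ j| := by
      simp only [hψ]
      rcases le_total (φ i) (φ a) with h1 | h1 <;> rcases le_total (φ j) (φ a) with h2 | h2 <;>
        simp [min_eq_left, min_eq_right, h1, h2, abs_sub_le_iff] <;>
        cases abs_sub_le_iff.1 (le_refl |φ i - φ j|) <;> constructor <;>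
        cases abs_le.1 (le_refl |φ i - φ j|) <;> linarith [le_abs_self (φ i - φ j), neg_abs_le (φ i - φ j)]
    calc (ψ i - ψ j)^2 = |ψ i - ψ j|^2 := (sq_abs _).symm
      _ ≤ |φ i - φ j|^2 := by apply pow_le_pow_left₀ (abs_nonneg _) this
      _ = (φ i - φ j)^2 := sq_abs _
  -- energy of ψ at least R
  have hEψge : R ≤ energy w ψ := by
    have := gap_sq w hsym hnn hdiag hconn P hP1 hP3 a b ψ
    rw [hψa, hψb, hgap] at this
    nlinarith
  have hEψ : energy w ψ = R := le_antisymm (by linarith) hEψge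
  -- midpoint
  set m : V → ℝ := fun y => (φ y + ψ y) / 2 with hm
  have hEm : R ≤ energy w m := by
    have := gap_sq w hsym hnn hdiag hconn P hP1 hP3 a b m
    have hma : m a - m b = R := by simp only [hm]; rw [hψa, hψb]; linarith
    rw [hma] at this
    nlinarith
  have hpar := energy_parallelogram w φ ψ
  have hd0 : energy w (fun y => (φ y - ψ y) / 2) = 0 := by
    have hge := energy_nonneg w hnn (fun y => (φ y - ψ y) / 2)
    rw [hEφ, hEψ] at hpar
    linarith
  have hLd := mulVec_eq_zero_of_energy w hnn hdiag _ hd0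
  have hconst := hconn _ hLd
  have h0 : ∀ y, φ y = ψ y := by
    intro y
    have h1 : (φ y - ψ y) / 2 = (φ a - ψ a) / 2 := hconst y a
    have h2 : ψ a = φ a := hψa
    linarith
  calc φ x = ψ x := h0 x
    _ ≤ φ a := min_le_right _ _
end maxp

section minp
variable (w : V → V → ℝ) (hsym : ∀ a b, w a b = w b a) (hnn : ∀ a b, 0 ≤ w a b)
  (hdiag : ∀ a, w a a = 0) (hconn : Conn w) (P : Matrix V V ℝ)
  (hP1 : lap w * P * lap w = lap w) (hP3 : (lap w * P)ᵀ = lap w * P) [Nonempty V]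

include hsym hnn hdiag hconn hP1 hP3

lemma minPrinciple (a b : V) (hab : a ≠ b) (x : V) :
    P.mulVec (chi a - chi b) b ≤ P.mulVec (chi a - chi b) x := by
  have hneg : chi b - chi a = -(chi a - chi b) := by ring
  have h := maxPrinciple w hsym hnn hdiag hconn P hP1 hP3 b a (Ne.symm hab) x
  rw [hneg, Matrix.mulVec_neg] at h
  simpa using h
end minp

/-- lift a potential on the contracted graph back to `V`. -/
def liftC (C : Finset V) (y : ({x : V // x ∉ C} ⊕ Unit) → ℝ) : V → ℝ :=
  fun a => if h : a ∈ C then y (Sum.inr ()) else y (Sum.inl ⟨a, h⟩)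

lemma sum_subtype_compl (C : Finset V) (f : V → ℝ) :
    ∑ x : {x : V // x ∉ C}, f x.1 = ∑ a ∈ Cᶜ, f a :=
  (Finset.sum_subtype Cᶜ (fun x => Finset.mem_compl) f).symm

lemma energy_contr (w : V → V → ℝ) (C : Finset V) (y : ({x : V // x ∉ C} ⊕ Unit) → ℝ) :
    energy (contrW w C) y = energy w (liftC C y) := by
  simp only [energy]
  congr 1
  have hin : ∀ a ∈ C, liftC C y a = y (Sum.inr ()) := by
    intro a h; simp [liftC, h]
  have hout : ∀ a (h : a ∉ C), liftC C y a = y (Sum.inl ⟨a, h⟩) := by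
    intro a h; simp [liftC, h]
  have hsplit : ∀ g : V → ℝ, ∑ a, g a = (∑ a ∈ C, g a) + ∑ a ∈ Cᶜ, g a :=
    fun g => (Finset.sum_add_sum_compl C g).symm
  have hinner : ∀ a : V, ∑ b, w a b * (liftC C y a - liftC C y b) ^ 2
      = (∑ b ∈ C, w a b * (liftC C y a - y (Sum.inr ())) ^ 2)
        + ∑ b ∈ Cᶜ, w a b * (liftC C y a - liftC C y b) ^ 2 := by
    intro a
    rw [hsplit fun b => w a b * (liftC C y a - liftC C y b) ^ 2]
    congr 1
    exact Finset.sum_congr rfl fun b hb => by rw [hin b hb]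
  have L11 : ∑ x : {x : V // x ∉ C}, ∑ p : ({x : V // x ∉ C} ⊕ Unit),
      contrW w C (Sum.inl x) p * (y (Sum.inl x) - y p) ^ 2
      = ∑ a ∈ Cᶜ, ∑ b, w a b * (liftC C y a - liftC C y b) ^ 2 := by
    rw [← sum_subtype_compl C fun a => ∑ b, w a b * (liftC C y a - liftC C y b) ^ 2]
    refine Finset.sum_congr rfl fun x _ => ?_
    rw [hinner x.1, Fintype.sum_sum_type, add_comm]
    congr 1
    · rw [Fintype.sum_unique]
      show contrW w C (Sum.inl x) (Sum.inr ()) * (y (Sum.inl x) - y (Sum.inr ())) ^ 2 = _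
      rw [show contrW w C (Sum.inl x) (Sum.inr ()) = ∑ z ∈ C, w x.1 z from rfl,
        Finset.sum_mul]
      exact Finset.sum_congr rfl fun b _ => by rw [hout x.1 x.2]
    · rw [← sum_subtype_compl C fun b => w x.1 b * (liftC C y x.1 - liftC C y b) ^ 2]
      refine Finset.sum_congr rfl fun z _ => ?_
      rw [show contrW w C (Sum.inl x) (Sum.inl z) = w x.1 z.1 from rfl,
        hout x.1 x.2, hout z.1 z.2]
  have L2 : ∑ u : Unit, ∑ p : ({x : V // x ∉ C} ⊕ Unit),
      contrW w C (Sum.inr u) p * (y (Sum.inr u) - y p) ^ 2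
      = ∑ a ∈ C, ∑ b, w a b * (liftC C y a - liftC C y b) ^ 2 := by
    rw [Fintype.sum_unique, Fintype.sum_sum_type]
    have hz : ∑ u : Unit, contrW w C (Sum.inr ()) (Sum.inr u) * (y (Sum.inr ()) - y (Sum.inr u)) ^ 2
        = 0 := by
      rw [Fintype.sum_unique]
      rw [show contrW w C (Sum.inr ()) (Sum.inr ()) = 0 from rfl, zero_mul]
    rw [hz, add_zero]
    have hR : ∑ a ∈ C, ∑ b, w a b * (liftC C y a - liftC C y b) ^ 2
        = ∑ b ∈ Cᶜ, ∑ a ∈ C, w a b * (y (Sum.inr ()) - liftC C y b) ^ 2 := by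
      have step : ∑ a ∈ C, ∑ b, w a b * (liftC C y a - liftC C y b) ^ 2
          = ∑ a ∈ C, ∑ b ∈ Cᶜ, w a b * (y (Sum.inr ()) - liftC C y b) ^ 2 := by
        refine Finset.sum_congr rfl fun a ha => ?_
        rw [hinner a, hin a ha]
        have hzz : ∑ b ∈ C, w a b * (y (Sum.inr ()) - y (Sum.inr ())) ^ 2 = 0 := by
          apply Finset.sum_eq_zero; intro b _; rw [sub_self]; ring_nf
        rw [hzz, zero_add]
      rw [step, Finset.sum_comm]
    rw [hR, ← sum_subtype_compl C fun b => ∑ a ∈ C, w a b * (y (Sum.inr ()) - liftC C y b) ^ 2]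
    refine Finset.sum_congr rfl fun x _ => ?_
    rw [show contrW w C (Sum.inr ()) (Sum.inl x) = ∑ z ∈ C, w z x.1 from rfl, Finset.sum_mul]
    refine Finset.sum_congr rfl fun z _ => ?_
    rw [hout x.1 x.2]
  rw [Fintype.sum_sum_type, L11, L2, hsplit fun a => ∑ b, w a b * (liftC C y a - liftC C y b) ^ 2,
    add_comm]

lemma contrW_symm (w : V → V → ℝ) (hsym : ∀ a b, w a b = w b a) (C : Finset V) :
    ∀ p q, contrW w C p q = contrW w C q p := by
  rintro (x | u) (z | u')
  · exact hsym x.1 z.1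
  · exact Finset.sum_congr rfl fun z _ => hsym x.1 z
  · exact Finset.sum_congr rfl fun z' _ => hsym z' z.1
  · rfl

lemma contrW_nonneg (w : V → V → ℝ) (hnn : ∀ a b, 0 ≤ w a b) (C : Finset V) :
    ∀ p q, 0 ≤ contrW w C p q := by
  rintro (x | u) (z | u')
  · exact hnn x.1 z.1
  · exact Finset.sum_nonneg fun z _ => hnn x.1 z
  · exact Finset.sum_nonneg fun z' _ => hnn z' z.1
  · exact le_refl 0

lemma contrW_diag (w : V → V → ℝ) (hdiag : ∀ a, w a a = 0) (C : Finset V) :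
    ∀ p, contrW w C p p = 0 := by
  rintro (x | u)
  · exact hdiag x.1
  · rfl

lemma conn_contr (w : V → V → ℝ) (hsym : ∀ a b, w a b = w b a) (hnn : ∀ a b, 0 ≤ w a b)
    (hdiag : ∀ a, w a a = 0) (hconn : Conn w) (C : Finset V) (c₀ : V) (hc₀ : c₀ ∈ C) :
    Conn (contrW w C) := by
  intro x hx p q
  have hE : energy (contrW w C) x = 0 := by
    rw [← quad_eq_energy (contrW w C) (contrW_symm w hsym C) (contrW_diag w hdiag C) x, hx]
    simp
  have hEG : energy w (liftC C x) = 0 := by rw [← energy_contr, hE]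
  have hL := mulVec_eq_zero_of_energy w hnn hdiag _ hEG
  have hconst := hconn _ hL
  have hval : ∀ p : ({x : V // x ∉ C} ⊕ Unit), ∃ a : V, liftC C x a = x p := by
    rintro (z | u)
    · exact ⟨z.1, by simp [liftC, z.2]⟩
    · exact ⟨c₀, by simp [liftC, hc₀]⟩
  obtain ⟨ap, hap⟩ := hval p
  obtain ⟨aq, haq⟩ := hval q
  rw [← hap, ← haq]
  exact hconst ap aq

lemma energy_min_le (w : V → V → ℝ) (hnn : ∀ a b, 0 ≤ w a b) (φ : V → ℝ) (t : ℝ) :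
    energy w (fun y => min (φ y) t) ≤ energy w φ := by
  apply mul_le_mul_of_nonneg_left _ (by norm_num : (0:ℝ) ≤ 1/2)
  apply Finset.sum_le_sum
  intro i _
  apply Finset.sum_le_sum
  intro j _
  apply mul_le_mul_of_nonneg_left _ (hnn i j)
  have habs : |min (φ i) t - min (φ j) t| ≤ |φ i - φ j| := by
    rcases le_total (φ i) t with h1 | h1 <;> rcases le_total (φ j) t with h2 | h2 <;>
      simp [min_eq_left, min_eq_right, h1, h2, abs_sub_le_iff] <;>
      constructor <;> cases abs_sub_le_iff.1 (le_refl |φ i - φ j|) <;>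
      linarith [le_abs_self (φ i - φ j), neg_abs_le (φ i - φ j)]
  calc (min (φ i) t - min (φ j) t)^2 = |min (φ i) t - min (φ j) t|^2 := (sq_abs _).symm
    _ ≤ |φ i - φ j|^2 := by apply pow_le_pow_left₀ (abs_nonneg _) habs
    _ = (φ i - φ j)^2 := sq_abs _


/-- if `u` lies in a set `C` of effective resistance diameter at most
`β` in `G`, and `H = G/C` is the contraction of `C` to a super-node `c`, then for
every `v ∉ C` with `R^G_{uv} ≥ β` one has
`R^H_{cv} ≥ R^G_{uv} (1 - β/R^G_{uv})²`. -/
theorem stmt7 (w : V → V → ℝ) (hsym : ∀ a b, w a b = w b a)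
    (hnn : ∀ a b, 0 ≤ w a b) (hdiag : ∀ a, w a a = 0) (hconn : Conn w)
    (P : Matrix V V ℝ) (hP : IsMPInv (lap w) P)
    (C : Finset V) (β : ℝ)
    (hdiam : ∀ x ∈ C, ∀ y ∈ C, effRes P x y ≤ β)
    (u : V) (hu : u ∈ C) (v : V) (hv : v ∉ C) (hβ : β ≤ effRes P u v)
    (PH : Matrix ({x : V // x ∉ C} ⊕ Unit) ({x : V // x ∉ C} ⊕ Unit) ℝ)
    (hPH : IsMPInv (lap (contrW w C)) PH) :
    effRes P u v * (1 - β / effRes P u v) ^ 2 ≤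
      effRes PH (Sum.inr ()) (Sum.inl ⟨v, hv⟩) := by
  obtain ⟨hP1, hP2, hP3, hP4⟩ := hP
  obtain ⟨hQ1, hQ2, hQ3, hQ4⟩ := hPH
  haveI : Nonempty V := ⟨u⟩
  have huv : u ≠ v := fun h => hv (h ▸ hu)
  set R := effRes P u v with hR
  have hβ0 : 0 ≤ β := by
    have h0 : effRes P u u = 0 := by simp [effRes]
    linarith [hdiam u hu u hu]
  have hRpos : 0 < R := effRes_pos w hsym hnn hdiag hconn P hP1 hP3 u v huv
  set φ := P.mulVec (chi u - chi v) with hφ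
  have hgapφ : φ u - φ v = R := by rw [hR, effRes, ← dot_chi_sub u v φ]
  have hEφ : energy w φ = R := (effRes_eq_energy w hsym hnn hdiag hconn P hP1 hP3 u v).symm
  -- bound on C
  have hCb : ∀ x ∈ C, φ u - φ x ≤ β := by
    intro x hx
    by_cases hxu : x = u
    · subst hxu; simpa using hβ0
    · have hux : u ≠ x := fun h => hxu h.symm
      set ρ := P.mulVec (chi u - chi x) with hρ
      have hswap : φ u - φ x = ρ u - ρ v := by
        rw [← dot_chi_sub u x φ, ← dot_chi_sub u v ρ, hφ, hρ,
          dot_P_swap w hsym hnn hdiag hconn P hP1 hP3 _ _ (sum_chi_sub u x) (sum_chi_sub u v)]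
      have hmin : ρ x ≤ ρ v := minPrinciple w hsym hnn hdiag hconn P hP1 hP3 u x hux v
      have hux2 : ρ u - ρ x = effRes P u x := by rw [effRes, ← dot_chi_sub u x ρ]
      have := hdiam u hu x hx
      linarith [hswap, hmin, hux2]
  set t := φ u - β with ht
  set ψ : V → ℝ := fun y => min (φ y) t with hψ
  have hψC : ∀ x ∈ C, ψ x = t := by
    intro x hx
    exact min_eq_right (by linarith [hCb x hx])
  have hψv : ψ v = φ v := min_eq_left (by linarith)
  have hEψ : energy w ψ ≤ R := by
    rw [← hEφ]; exact energy_min_le w hnn φ t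
  -- lifted potential on H
  set ψH : ({x : V // x ∉ C} ⊕ Unit) → ℝ := Sum.elim (fun x => ψ x.1) (fun _ => t) with hψH
  have hlift : liftC C ψH = ψ := by
    funext a
    by_cases h : a ∈ C
    · simp only [liftC, h, dif_pos]
      rw [hψC a h]; rfl
    · simp only [liftC, h, dite_false, dif_neg, not_false_iff]
      rfl
  have hEH : energy (contrW w C) ψH = energy w ψ := by rw [energy_contr, hlift]
  have hconnH : Conn (contrW w C) := conn_contr w hsym hnn hdiag hconn C u hu
  have hgs := gap_sq (contrW w C) (contrW_symm w hsym C) (contrW_nonneg w hnn C)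
    (contrW_diag w hdiag C) hconnH PH hQ1 hQ3 (Sum.inr ()) (Sum.inl ⟨v, hv⟩) ψH
  have hgap : ψH (Sum.inr ()) - ψH (Sum.inl ⟨v, hv⟩) = R - β := by
    simp only [hψH, Sum.elim_inr, Sum.elim_inl]
    rw [hψv]; linarith
  rw [hgap, hEH] at hgs
  have hRHnn : 0 ≤ effRes PH (Sum.inr ()) (Sum.inl ⟨v, hv⟩) :=
    effRes_nonneg (contrW w C) (contrW_symm w hsym C) (contrW_nonneg w hnn C)
      (contrW_diag w hdiag C) hconnH PH hQ1 hQ3 _ _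
  have hfinal : (R - β)^2 ≤ effRes PH (Sum.inr ()) (Sum.inl ⟨v, hv⟩) * R := by
    calc (R - β)^2 ≤ effRes PH (Sum.inr ()) (Sum.inl ⟨v, hv⟩) * energy w ψ := hgs
      _ ≤ effRes PH (Sum.inr ()) (Sum.inl ⟨v, hv⟩) * R :=
          mul_le_mul_of_nonneg_left hEψ hRHnn
  have heq : R * (1 - β / R) ^ 2 = (R - β)^2 / R := by
    field_simp
  rw [heq, div_le_iff₀ hRpos]
  exact hfinal
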